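/- For every binary relation R on a set W with at least 5 elements, the word equation c_D i_D ˘ c_D i_D ˘ c_D i_D ˘ c_D i_D ˘ c_D i_D = ˘ c_D i_D ˘ c_D i_D ˘ c_D i_D ˘ c_D i_D ˘ c_D i_D ˘ holds: both sides, applied to R, define the relation {(x,y) ∈ W² : ∃u v, (u,v) ∈ R ∧ u ≠ v}; in particular, both sides applied to R equal W² if R contains an irreflexive pair, and equal ∅ otherwise. -/
import Mathlib


/-- Relational composition. -/
def rcomp {W : Type} (R S : Set (W × W)) : Set (W × W) :=
  {p | ∃ z, (p.1, z) ∈ R ∧ (z, p.2) ∈ S}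

/-- The identity relation on `W`. -/
def idRel' {W : Type} : Set (W × W) := {p | p.1 = p.2}

/-- The difference (inequality) relation on `W`. -/
def diffRel {W : Type} : Set (W × W) := {p | p.1 ≠ p.2}

/-- The converse of a relation. -/
def rconv {W : Type} (R : Set (W × W)) : Set (W × W) := {p | (p.2, p.1) ∈ R}

/-- The four context letters: `_ ∩ I`, `_ ∩ D`, `_ · D`, and converse. -/
inductive Letter : Type
  | iI : Letter
  | iD : Letter
  | cD : Letter
  | rv : Letter
deriving DecidableEq

/-- A letter acting on a relation. -/
def applyL {W : Type} : Letter → Set (W × W) → Set (W × W)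
  | .iI, R => R ∩ idRel'
  | .iD, R => R ∩ diffRel
  | .cD, R => rcomp R diffRel
  | .rv, R => rconv R

/-- A word of context letters acting on a relation (leftmost letter outermost). -/
def applyW {W : Type} (w : List Letter) (R : Set (W × W)) : Set (W × W) :=
  w.foldr applyL R

lemma exists_ne4 {W : Type} (h : ∃ f : Fin 5 → W, Function.Injective f)
    (a b c d : W) : ∃ z, z ≠ a ∧ z ≠ b ∧ z ≠ c ∧ z ≠ d := by
  classical
  obtain ⟨f, hf⟩ := h
  by_contra hcon
  push_neg at hcon
  have hsub : Finset.univ.image f ⊆ ({a, b, c, d} : Finset W) := by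
    intro x hx
    simp only [Finset.mem_image] at hx
    obtain ⟨i, _, rfl⟩ := hx
    simp only [Finset.mem_insert, Finset.mem_singleton]
    by_contra hx2
    push_neg at hx2
    exact hx2.2.2.2 (hcon _ hx2.1 hx2.2.1 hx2.2.2.1)
  have h5 : (Finset.univ.image f).card = 5 := by
    rw [Finset.card_image_of_injective _ hf]; simp
  have h4 : ({a, b, c, d} : Finset W).card ≤ 4 := by
    apply le_trans (Finset.card_insert_le _ _)
    apply Nat.succ_le_succ
    apply le_trans (Finset.card_insert_le _ _)
    apply Nat.succ_le_succ
    apply le_trans (Finset.card_insert_le _ _)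
    apply Nat.succ_le_succ
    simp
  have := Finset.card_le_card hsub
  omega

lemma L5_univ {W : Type} (h : ∃ f : Fin 5 → W, Function.Injective f)
    {R : Set (W × W)} {u v : W} (huv : (u, v) ∈ R) (hne : u ≠ v) :
    applyW [.cD, .iD, .rv, .cD, .iD, .rv, .cD, .iD, .rv, .cD, .iD, .rv, .cD, .iD] R = Set.univ := by
  ext ⟨x, y⟩
  simp only [applyW, List.foldr, applyL, rcomp, rconv, idRel', diffRel,
    Set.mem_setOf_eq, Set.mem_inter_iff, Set.mem_univ, iff_true]
  obtain ⟨a, hax, hay, -, -⟩ := exists_ne4 h x y x y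
  obtain ⟨c, hcu, hcv, hca, -⟩ := exists_ne4 h u v a a
  obtain ⟨b, hbu, hbx, hba, hbc⟩ := exists_ne4 h u x a c
  exact ⟨a, ⟨⟨b, ⟨⟨c, ⟨⟨u, ⟨⟨v, ⟨huv, hne⟩, hcv.symm⟩, hcu⟩, hbu.symm⟩, hbc⟩, hca⟩, hba.symm⟩, hbx⟩, hax.symm⟩, hay⟩

lemma rcomp_empty {W : Type} (S : Set (W × W)) : rcomp ∅ S = ∅ := by
  ext p; simp [rcomp]

lemma rconv_empty {W : Type} : rconv (∅ : Set (W × W)) = ∅ := by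
  ext p; simp [rconv]

/-- Equation (20): over a set with at least 5 elements, both sides
`c_D i_D ˘ c_D i_D ˘ c_D i_D ˘ c_D i_D ˘ c_D i_D` and
`˘ c_D i_D ˘ c_D i_D ˘ c_D i_D ˘ c_D i_D ˘ c_D i_D ˘`, applied to `R`,
define the relation `{(x,y) : ∃ u v, (u,v) ∈ R ∧ u ≠ v}`. -/
theorem equation_20 {W : Type} (h : ∃ f : Fin 5 → W, Function.Injective f)
    (R : Set (W × W)) :
    applyW [.cD, .iD, .rv, .cD, .iD, .rv, .cD, .iD, .rv, .cD, .iD, .rv, .cD, .iD] R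
      = {p : W × W | ∃ u v : W, (u, v) ∈ R ∧ u ≠ v} ∧
    applyW [.rv, .cD, .iD, .rv, .cD, .iD, .rv, .cD, .iD, .rv, .cD, .iD, .rv, .cD, .iD, .rv] R
      = {p : W × W | ∃ u v : W, (u, v) ∈ R ∧ u ≠ v} := by

  by_cases hex : ∃ u v : W, (u, v) ∈ R ∧ u ≠ v
  · obtain ⟨u, v, huv, hne⟩ := hex
    have hset : {p : W × W | ∃ u v : W, (u, v) ∈ R ∧ u ≠ v} = Set.univ := by
      ext p; simp only [Set.mem_setOf_eq, Set.mem_univ, iff_true]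
      exact ⟨u, v, huv, hne⟩
    rw [hset]
    refine ⟨L5_univ h huv hne, ?_⟩
    have h2 : (v, u) ∈ rconv R := huv
    have hrw : applyW [.rv, .cD, .iD, .rv, .cD, .iD, .rv, .cD, .iD, .rv, .cD, .iD, .rv, .cD, .iD, .rv] R
        = rconv (applyW [.cD, .iD, .rv, .cD, .iD, .rv, .cD, .iD, .rv, .cD, .iD, .rv, .cD, .iD] (rconv R)) := rfl
    rw [hrw, L5_univ h h2 hne.symm]
    ext p; simp [rconv]
  · have hRD : R ∩ diffRel = ∅ := by
      ext ⟨a, b⟩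
      simp only [Set.mem_inter_iff, Set.mem_empty_iff_false, iff_false, diffRel, Set.mem_setOf_eq]
      rintro ⟨hab, hne⟩
      exact hex ⟨a, b, hab, hne⟩
    have hRD2 : rconv R ∩ diffRel = ∅ := by
      ext ⟨a, b⟩
      simp only [Set.mem_inter_iff, Set.mem_empty_iff_false, iff_false, diffRel, rconv,
        Set.mem_setOf_eq]
      rintro ⟨hab, hne⟩
      exact hex ⟨b, a, hab, hne.symm⟩
    have hset : {p : W × W | ∃ u v : W, (u, v) ∈ R ∧ u ≠ v} = ∅ := by
      ext p
      simp only [Set.mem_setOf_eq, Set.mem_empty_iff_false, iff_false]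
      rintro ⟨u, v, huv, hne⟩
      exact hex ⟨u, v, huv, hne⟩
    rw [hset]
    constructor <;>
      simp [applyW, applyL, hRD, hRD2, rcomp_empty, rconv_empty, Set.empty_inter]
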